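/- Fix n ≥ 1, continuously differentiable per-batch losses E_0, …, E_{n−1} : ℝ^D → ℝ, θ₀ ∈ ℝ^D, h > 0, and θ ∈ ℝ^D. For a permutation σ of {0, …, n−1} define the shuffled modified loss Ẽ_σ(θ) = Ē(θ) + (n h / 4) ‖∇Ē(θ)‖² − (h/n) Σ_{μ=1}^{n−1} ⟨∇E_{σ(μ)}(θ), Σ_{τ=0}^{μ−1} ∇E_{σ(τ)}(θ₀)⟩, where Ē = (1/n) Σ_{k=0}^{n−1} E_k. Then the expectation over a uniformly random permutation σ equals (1/n!) Σ_{σ ∈ S_n} Ẽ_σ(θ) = Ē(θ) + (n h / 4) ‖∇Ē(θ)‖² − (h / (2n)) ( Σ_{k=0}^{n−1} Σ_{i=0}^{n−1} ⟨∇E_k(θ), ∇E_i(θ₀)⟩ − Σ_{k=0}^{n−1} ⟨∇E_k(θ), ∇E_k(θ₀)⟩ ). -/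

import Mathlib

open scoped RealInnerProductSpace

/-- The average loss `Ē = (1/n) ∑ E_k` for losses indexed by `Fin n`. -/
noncomputable def avgLossFin {D n : ℕ} (E : Fin n → EuclideanSpace ℝ (Fin D) → ℝ)
    (θ : EuclideanSpace ℝ (Fin D)) : ℝ :=
  (1 / (n : ℝ)) * ∑ k : Fin n, E k θ

/-- The modified loss for `n` SGD steps when the batches are presented in the
order `σ(0), …, σ(n−1)` (the `μ = 0` term of the order-dependent sum vanishes,
so we may sum over all `μ`). -/
noncomputable def shuffledModLoss {D n : ℕ} (E : Fin n → EuclideanSpace ℝ (Fin D) → ℝ)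
    (θ₀ : EuclideanSpace ℝ (Fin D)) (h : ℝ) (σ : Equiv.Perm (Fin n))
    (θ : EuclideanSpace ℝ (Fin D)) : ℝ :=
  avgLossFin E θ + ((n : ℝ) * h / 4) * ‖gradient (avgLossFin E) θ‖ ^ 2
    - (h / (n : ℝ)) * ∑ μ : Fin n,
        ⟪gradient (E (σ μ)) θ, ∑ τ ∈ Finset.Iio μ, gradient (E (σ τ)) θ₀⟫

/-! For any `f`, the averaged matrix `c i j = ∑ σ, f (σ i) (σ j)` is symmetric (precompose `σ` with
the transposition `(i j)`), so its sum over the pairs `j < i` is half of its off-diagonal sum;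
relabelling by each `σ` gives `∑ c = n! ∑ f` and `∑ c i i = n! ∑ f i i`. Applied to
`f k i = ⟪∇E_k(θ), ∇E_i(θ₀)⟫` this averages the only order-dependent term of `Ẽ_σ`. -/

open Finset Equiv Equiv.Perm Nat

section
variable {ι M : Type*} [Fintype ι] [DecidableEq ι] [AddCommMonoid M]

theorem sum_perm_apply_comm (f : ι → ι → M) (i j : ι) :
    ∑ σ : Perm ι, f (σ i) (σ j) = ∑ σ : Perm ι, f (σ j) (σ i) :=
  Fintype.sum_equiv (Equiv.mulRight (swap i j)) _ _ fun σ => by simp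

theorem sum_sum_sum_perm_apply (f : ι → ι → M) :
    ∑ i, ∑ j, ∑ σ : Perm ι, f (σ i) (σ j) = (Fintype.card ι)! • ∑ i, ∑ j, f i j := by
  have relabel (σ : Perm ι) : ∑ i, ∑ j, f (σ i) (σ j) = ∑ i, ∑ j, f i j := by
    simp_rw [Equiv.sum_comp σ (f (σ _)), Equiv.sum_comp σ fun i => ∑ j, f i j]
  calc _ = ∑ σ : Perm ι, ∑ i, ∑ j, f (σ i) (σ j) :=
        (sum_congr rfl fun _ _ => sum_comm).trans sum_comm
    _ = _ := by simp [relabel, Fintype.card_perm]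

theorem sum_sum_perm_apply_diag (f : ι → ι → M) :
    ∑ i, ∑ σ : Perm ι, f (σ i) (σ i) = (Fintype.card ι)! • ∑ i, f i i := by
  rw [sum_comm]
  simp [Equiv.sum_comp _ fun i => f i i, Fintype.card_perm]

end

section
variable {ι : Type*} [Fintype ι] [LinearOrder ι] [LocallyFiniteOrderTop ι] [LocallyFiniteOrderBot ι]

theorem two_nsmul_sum_perm_sum_Iio {M : Type*} [AddCommGroup M] (f : ι → ι → M) :
    2 • ∑ σ : Perm ι, ∑ i, ∑ j ∈ Iio i, f (σ i) (σ j)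
      = (Fintype.card ι)! • (∑ i, ∑ j, f i j - ∑ i, f i i) := by
  set c : ι → ι → M := fun i j => ∑ σ : Perm ι, f (σ i) (σ j) with hc
  have hswap : ∑ σ : Perm ι, ∑ i, ∑ j ∈ Iio i, f (σ i) (σ j) = ∑ j, ∑ i ∈ Ioi j, c i j :=
    calc _ = ∑ i, ∑ j ∈ Iio i, c i j := sum_comm.trans (sum_congr rfl fun _ _ => sum_comm)
      _ = _ := sum_comm' fun i j => by simp
  have hoff (j : ι) : ∑ i ∈ {j}ᶜ, c i j = ∑ i, c i j - c j j :=
    eq_sub_of_add_eq (by simpa using sum_compl_add_sum {j} (c · j))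
  calc 2 • ∑ σ : Perm ι, ∑ i, ∑ j ∈ Iio i, f (σ i) (σ j)
      = ∑ j, ∑ i ∈ Ioi j, (c i j + c j i) := by
        simp only [hswap, two_nsmul, ← sum_add_distrib, hc, sum_perm_apply_comm f _ _]
    _ = ∑ j, (∑ i, c i j - c j j) := by
        rw [sum_sum_Ioi_add_eq_sum_sum_off_diag]; exact sum_congr rfl fun j _ => hoff j
    _ = _ := by
        rw [sum_sub_distrib, sum_comm, nsmul_sub, sum_sum_sum_perm_apply, sum_sum_perm_apply_diag]

theorem one_div_factorial_mul_sum_perm_sum_Iio (f : ι → ι → ℝ) :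
    1 / ((Fintype.card ι)! : ℝ) * ∑ σ : Perm ι, ∑ i, ∑ j ∈ Iio i, f (σ i) (σ j)
      = (∑ i, ∑ j, f i j - ∑ i, f i i) / 2 := by
  have key := two_nsmul_sum_perm_sum_Iio f
  rw [nsmul_eq_mul, nsmul_eq_mul] at key
  field_simp
  linear_combination key

end

theorem expectation_shuffled_modified_loss_general {D n : ℕ}
    (E : Fin n → EuclideanSpace ℝ (Fin D) → ℝ)
    (θ₀ : EuclideanSpace ℝ (Fin D)) (h : ℝ)
    (θ : EuclideanSpace ℝ (Fin D)) :
    (1 / (n.factorial : ℝ)) * ∑ σ : Equiv.Perm (Fin n), shuffledModLoss E θ₀ h σ θ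
      = avgLossFin E θ + ((n : ℝ) * h / 4) * ‖gradient (avgLossFin E) θ‖ ^ 2
        - (h / (2 * (n : ℝ))) *
            ((∑ k : Fin n, ∑ i : Fin n, ⟪gradient (E k) θ, gradient (E i) θ₀⟫)
              - ∑ k : Fin n, ⟪gradient (E k) θ, gradient (E k) θ₀⟫) := by
  have mean := one_div_factorial_mul_sum_perm_sum_Iio
    fun k i => ⟪gradient (E k) θ, gradient (E i) θ₀⟫
  rw [Fintype.card_fin] at mean
  have hfac : (n ! : ℝ) ≠ 0 := by positivity
  simp only [shuffledModLoss, inner_sum, sum_sub_distrib, sum_const, Finset.card_univ,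
    Fintype.card_perm, Fintype.card_fin, ← mul_sum, nsmul_eq_mul, mul_sub]
  rw [← mul_assoc, one_div_mul_cancel hfac, one_mul, mul_left_comm, mean]
  ring

/-- The expectation over a uniformly random permutation of the batches of the
shuffled modified loss. -/
theorem expectation_shuffled_modified_loss {D n : ℕ} (hn : 1 ≤ n)
    (E : Fin n → EuclideanSpace ℝ (Fin D) → ℝ)
    (hE : ∀ k, ContDiff ℝ 1 (E k))
    (θ₀ : EuclideanSpace ℝ (Fin D)) (h : ℝ) (hh : 0 < h)
    (θ : EuclideanSpace ℝ (Fin D)) :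
    (1 / (n.factorial : ℝ)) * ∑ σ : Equiv.Perm (Fin n), shuffledModLoss E θ₀ h σ θ
      = avgLossFin E θ + ((n : ℝ) * h / 4) * ‖gradient (avgLossFin E) θ‖ ^ 2
        - (h / (2 * (n : ℝ))) *
            ((∑ k : Fin n, ∑ i : Fin n, ⟪gradient (E k) θ, gradient (E i) θ₀⟫)
              - ∑ k : Fin n, ⟪gradient (E k) θ, gradient (E k) θ₀⟫) :=
  expectation_shuffled_modified_loss_general E θ₀ h θ
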